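/- Let (Ω, F, P) be a probability space. For each n ∈ ℕ let p_n, m ∈ ℕ, let β₀ₙ ∈ ℝ^{p_n}, let f_n : ℝ^{p_n} → ℝ^m, let D_n be a real m × p_n matrix, and let β̂_n : Ω → ℝ^{p_n} be a measurable random vector. Assume: (C1, uniform version) for every ε > 0 there exists δ > 0 such that for all n and all h ∈ ℝ^{p_n} with 0 < ‖h‖₂ ≤ δ one has ‖f_n(β₀ₙ + h) − f_n(β₀ₙ) − D_n h‖₂ ≤ ε‖h‖₂; (C2) r_n is a sequence of positive reals with r_n → ∞ and the sequence of random variables r_n‖β̂_n − β₀ₙ‖₂ is bounded in probability. If d_n is a sequence of positive reals with d_n → ∞ and there is a universal constant C > 0 with ‖|D_n|‖₂ ≤ C/d_n for all n, where ‖|·|‖₂ denotes the Frobenius norm, then r_n‖f_n(β̂_n) − f_n(β₀ₙ)‖₂ converges to 0 in probability, i.e. ‖f_n(β̂_n) − f_n(β₀ₙ)‖₂ = o_p(1/r_n). -/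

import Mathlib

open MeasureTheory ProbabilityTheory Filter
open scoped Matrix

/-! Fix `δ, ε > 0` and take `M` with `P(r_n ‖β̂_n - β₀ₙ‖ > M) < ε`. Off that event
`‖β̂_n - β₀ₙ‖ ≤ M / r_n → 0`, so (C1) together with `‖D_n h‖ ≤ ‖|D_n|‖₂ ‖h‖` (Cauchy–Schwarz)
and `‖|D_n|‖₂ ≤ C / d_n → 0` gives, for large `n`, `‖f_n(β̂_n) - f_n(β₀ₙ)‖ ≤ (δ / M) ‖β̂_n - β₀ₙ‖`,
hence `r_n ‖f_n(β̂_n) - f_n(β₀ₙ)‖ ≤ δ`. So the event `{r_n ‖f_n(β̂_n) - f_n(β₀ₙ)‖ > δ}` is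
eventually inside one of probability `< ε`. -/

/-- Euclidean (ℓ₂) norm of a vector in ℝ^p. -/
noncomputable def l2 {p : ℕ} (v : Fin p → ℝ) : ℝ := Real.sqrt (∑ j, (v j) ^ 2)

/-- Frobenius norm of an m × p real matrix. -/
noncomputable def frob {m p : ℕ} (A : Matrix (Fin m) (Fin p) ℝ) : ℝ :=
  Real.sqrt (∑ i, ∑ j, (A i j) ^ 2)

section L2

variable {m p : ℕ}

lemma l2_eq_norm (v : Fin p → ℝ) : l2 v = ‖WithLp.toLp 2 v‖ := by
  simp [l2, EuclideanSpace.norm_eq, Real.norm_eq_abs, sq_abs]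

lemma l2_nonneg (v : Fin p → ℝ) : 0 ≤ l2 v := Real.sqrt_nonneg _

lemma frob_nonneg (A : Matrix (Fin m) (Fin p) ℝ) : 0 ≤ frob A := Real.sqrt_nonneg _

lemma l2_add_le (v w : Fin p → ℝ) : l2 (v + w) ≤ l2 v + l2 w := by
  simpa only [l2_eq_norm, WithLp.toLp_add] using norm_add_le _ _

lemma l2_eq_zero_iff {v : Fin p → ℝ} : l2 v = 0 ↔ v = 0 := by
  rw [l2_eq_norm, norm_eq_zero, WithLp.toLp_eq_zero]

lemma l2_mulVec_le (A : Matrix (Fin m) (Fin p) ℝ) (v : Fin p → ℝ) :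
    l2 (A *ᵥ v) ≤ frob A * l2 v := by
  have cauchySchwarz : ∑ i, (A *ᵥ v) i ^ 2 ≤ (∑ i, ∑ j, A i j ^ 2) * ∑ j, v j ^ 2 := by
    rw [Finset.sum_mul]
    exact Finset.sum_le_sum fun i _ => Finset.sum_mul_sq_le_sq_mul_sq Finset.univ (A i) v
  rw [l2, frob, l2, ← Real.sqrt_mul (by positivity)]
  exact Real.sqrt_le_sqrt cauchySchwarz

end L2

lemma l2_map_add_sub_le_of_linear_approx {m p : ℕ} {g : (Fin p → ℝ) → (Fin m → ℝ)}
    {x : Fin p → ℝ} {A : Matrix (Fin m) (Fin p) ℝ} {ε δ : ℝ}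
    (happrox : ∀ h : Fin p → ℝ, 0 < l2 h → l2 h ≤ δ → l2 (g (x + h) - g x - A *ᵥ h) ≤ ε * l2 h)
    {h : Fin p → ℝ} (hδ : l2 h ≤ δ) :
    l2 (g (x + h) - g x) ≤ (ε + frob A) * l2 h := by
  rcases (l2_nonneg h).eq_or_lt with hzero | hpos
  · obtain rfl := l2_eq_zero_iff.mp hzero.symm
    simp [l2]
  calc l2 (g (x + h) - g x)
      = l2 ((g (x + h) - g x - A *ᵥ h) + A *ᵥ h) := by rw [sub_add_cancel]
    _ ≤ l2 (g (x + h) - g x - A *ᵥ h) + l2 (A *ᵥ h) := l2_add_le _ _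
    _ ≤ ε * l2 h + frob A * l2 h := add_le_add (happrox h hpos hδ) (l2_mulVec_le A h)
    _ = (ε + frob A) * l2 h := by ring

lemma tendsto_measure_setOf_lt_of_tight {ι Ω : Type*} [MeasurableSpace Ω] {μ : Measure Ω}
    {l : Filter ι} {X Y : ι → Ω → ℝ}
    (hY : ∀ ε > (0 : ℝ), ∃ M > (0 : ℝ), ∀ i, μ {ω | M < Y i ω} < ENNReal.ofReal ε)
    {δ : ℝ} (hXY : ∀ M > (0 : ℝ), ∀ᶠ i in l, ∀ ω, Y i ω ≤ M → X i ω ≤ δ) :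
    Tendsto (fun i => μ {ω | δ < X i ω}) l (nhds 0) := by
  refine ENNReal.tendsto_nhds_zero.mpr fun ε hε => ?_
  obtain ⟨t, -, ht, htε⟩ := ENNReal.lt_iff_exists_real_btwn.mp hε
  obtain ⟨M, hM, hYM⟩ := hY t (ENNReal.ofReal_pos.mp ht)
  filter_upwards [hXY M hM] with i hi
  have hsubset : {ω | δ < X i ω} ⊆ {ω | M < Y i ω} := fun ω hω => by
    by_contra hle
    exact (hi ω (not_lt.mp hle)).not_gt hω
  exact ((measure_mono hsubset).trans_lt ((hYM i).trans htε)).le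

lemma eventually_mul_l2_map_sub_le {p : ℕ → ℕ} {m : ℕ} {β₀ : ∀ n, Fin (p n) → ℝ}
    {f : ∀ n, (Fin (p n) → ℝ) → (Fin m → ℝ)} {D : ∀ n, Matrix (Fin m) (Fin (p n)) ℝ}
    (hC1 : ∀ ε > (0 : ℝ), ∃ δ > (0 : ℝ), ∀ n, ∀ h : Fin (p n) → ℝ,
      0 < l2 h → l2 h ≤ δ → l2 (f n (β₀ n + h) - f n (β₀ n) - D n *ᵥ h) ≤ ε * l2 h)
    (hD : Tendsto (fun n => frob (D n)) atTop (nhds 0))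
    {r : ℕ → ℝ} (hr : Tendsto r atTop atTop) {M δ : ℝ} (hM : 0 < M) (hδ : 0 < δ) :
    ∀ᶠ n in atTop, ∀ x : Fin (p n) → ℝ,
      r n * l2 (x - β₀ n) ≤ M → r n * l2 (f n x - f n (β₀ n)) ≤ δ := by
  obtain ⟨δ₁, hδ₁, happrox⟩ := hC1 (δ / (2 * M)) (by positivity)
  filter_upwards [hr.eventually_gt_atTop 0, hr.eventually_ge_atTop (M / δ₁),
    hD.eventually (ge_mem_nhds (by positivity : 0 < δ / (2 * M)))] with n hrpos hrlarge hfrob x hx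
  have hsmall : l2 (x - β₀ n) ≤ δ₁ := by
    rw [div_le_iff₀ hδ₁] at hrlarge
    nlinarith
  have hbound := l2_map_add_sub_le_of_linear_approx (happrox n) hsmall
  rw [add_sub_cancel] at hbound
  calc r n * l2 (f n x - f n (β₀ n))
      ≤ r n * ((δ / (2 * M) + δ / (2 * M)) * l2 (x - β₀ n)) := by
        gcongr
        exact hbound.trans (mul_le_mul_of_nonneg_right (by linarith) (l2_nonneg _))
    _ = δ / M * (r n * l2 (x - β₀ n)) := by ring
    _ ≤ δ / M * M := by gcongr
    _ = δ := by field_simp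

theorem stmt_2_general {Ω : Type*} [MeasureSpace Ω]
    (p : ℕ → ℕ) (m : ℕ)
    (β₀ : ∀ n, Fin (p n) → ℝ)
    (f : ∀ n, (Fin (p n) → ℝ) → (Fin m → ℝ))
    (D : ∀ n, Matrix (Fin m) (Fin (p n)) ℝ)
    (βhat : ∀ n, Ω → (Fin (p n) → ℝ))
    (hC1 : ∀ ε > (0 : ℝ), ∃ δ > (0 : ℝ), ∀ n, ∀ h : Fin (p n) → ℝ,
      0 < l2 h → l2 h ≤ δ →
      l2 (f n (β₀ n + h) - f n (β₀ n) - (D n).mulVec h) ≤ ε * l2 h)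
    (r : ℕ → ℝ) (hrtop : Tendsto r atTop atTop)
    (hC2 : ∀ ε > (0 : ℝ), ∃ M > (0 : ℝ), ∀ n,
      ℙ {ω | M < r n * l2 (βhat n ω - β₀ n)} < ENNReal.ofReal ε)
    (d : ℕ → ℝ) (hdtop : Tendsto d atTop atTop)
    (C : ℝ)
    (hD : ∀ n, frob (D n) ≤ C / d n) :
    ∀ δ > (0 : ℝ),
      Tendsto (fun n => ℙ {ω | δ < r n * l2 (f n (βhat n ω) - f n (β₀ n))})
        atTop (nhds 0) := by
  have hfrob : Tendsto (fun n => frob (D n)) atTop (nhds 0) :=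
    squeeze_zero (fun n => frob_nonneg (D n)) hD (tendsto_const_nhds.div_atTop hdtop)
  exact fun δ hδ => tendsto_measure_setOf_lt_of_tight hC2 fun M hM =>
    (eventually_mul_l2_map_sub_le hC1 hfrob hrtop hM hδ).mono fun n hn ω => hn (βhat n ω)

/-- Theorem 1(c): if the Frobenius norm of the derivative matrices satisfies
`‖|D_n|‖₂ ≤ C/d_n` with `d_n → ∞`, then `‖f_n(β̂_n) - f_n(β₀ₙ)‖₂ = o_p(1/r_n)`. -/
theorem stmt_2 {Ω : Type*} [MeasureSpace Ω] [IsProbabilityMeasure (ℙ : Measure Ω)]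
    (p : ℕ → ℕ) (m : ℕ)
    (β₀ : ∀ n, Fin (p n) → ℝ)
    (f : ∀ n, (Fin (p n) → ℝ) → (Fin m → ℝ))
    (D : ∀ n, Matrix (Fin m) (Fin (p n)) ℝ)
    (βhat : ∀ n, Ω → (Fin (p n) → ℝ))
    (hmeas : ∀ n, Measurable (βhat n))
    (hC1 : ∀ ε > (0 : ℝ), ∃ δ > (0 : ℝ), ∀ n, ∀ h : Fin (p n) → ℝ,
      0 < l2 h → l2 h ≤ δ →
      l2 (f n (β₀ n + h) - f n (β₀ n) - (D n).mulVec h) ≤ ε * l2 h)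
    (r : ℕ → ℝ) (hrpos : ∀ n, 0 < r n) (hrtop : Tendsto r atTop atTop)
    (hC2 : ∀ ε > (0 : ℝ), ∃ M > (0 : ℝ), ∀ n,
      ℙ {ω | M < r n * l2 (βhat n ω - β₀ n)} < ENNReal.ofReal ε)
    (d : ℕ → ℝ) (hdpos : ∀ n, 0 < d n) (hdtop : Tendsto d atTop atTop)
    (C : ℝ) (hC : 0 < C)
    (hD : ∀ n, frob (D n) ≤ C / d n) :
    ∀ δ > (0 : ℝ),
      Tendsto (fun n => ℙ {ω | δ < r n * l2 (f n (βhat n ω) - f n (β₀ n))})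
        atTop (nhds 0) :=
  stmt_2_general p m β₀ f D βhat hC1 r hrtop hC2 d hdtop C hD
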